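/- Let f : [0,T] × ℝ → ℝ be continuous with |f(t,v)| ≤ A_f + B_f|v| and |f(t,v) − f(t,v')| ≤ L_f|v − v'| for all t ∈ [0,T] and v, v' ∈ ℝ. Then for every g ∈ L²(I^d) and every continuous w : [0,T] → L²(I^d), there exists a unique continuous u : [0,T] → L²(I^d) satisfying, for all t ∈ [0,T], u(t) = g + ∫₀ᵗ [ f(s, u(s)) + 𝐊[u(s)] ] ds + w(t), where f acts pointwise, i.e. f(s,u(s)) denotes the element x ↦ f(s, u(s)(x)) of L²(I^d), and the integral is the L²(I^d)-valued Bochner integral. -/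

import Mathlib

open MeasureTheory Set intervalIntegral

noncomputable section

/-- The unit cube `I^d ⊆ ℝ^d`. -/
def unitCube (d : ℕ) : Set (Fin d → ℝ) := Set.Icc 0 1

/-- Lebesgue measure restricted to the unit cube. -/
def cubeMeasure (d : ℕ) : Measure (Fin d → ℝ) := volume.restrict (unitCube d)

instance cubeMeasure_prob (d : ℕ) : IsProbabilityMeasure (cubeMeasure d) := by
  constructor
  rw [cubeMeasure, Measure.restrict_apply_univ, unitCube, Real.volume_Icc_pi]
  simp

section helpers
open Function

variable {α : Type*} [MeasurableSpace α] {μ : Measure α}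

lemma norm_Lp_sq (H : Lp ℝ 2 μ) : ‖H‖ ^ 2 = ∫ x, (H x) ^ 2 ∂μ := by
  rw [← real_inner_self_eq_norm_sq, L2.inner_def]
  apply MeasureTheory.integral_congr_ae
  filter_upwards with x
  simp [RCLike.inner_apply, sq]

lemma my_integrable_mul {a b : α → ℝ} (ha : MemLp a 2 μ) (hb : MemLp b 2 μ) :
    Integrable (fun x => a x * b x) μ := by
  have h := L2.integrable_inner (𝕜 := ℝ) (ha.toLp a) (hb.toLp b)
  refine h.congr ?_
  filter_upwards [ha.coeFn_toLp, hb.coeFn_toLp] with x h1 h2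
  simp [RCLike.inner_apply, h1, h2, mul_comm]

lemma norm_toLp_sq {a : α → ℝ} (ha : MemLp a 2 μ) :
    ‖ha.toLp a‖ ^ 2 = ∫ x, a x ^ 2 ∂μ := by
  rw [norm_Lp_sq]
  apply MeasureTheory.integral_congr_ae
  filter_upwards [ha.coeFn_toLp] with x h1
  rw [h1]

lemma my_abs_memℒp {a : α → ℝ} (ha : MemLp a 2 μ) : MemLp (fun x => |a x|) 2 μ := by
  simpa [Real.norm_eq_abs] using ha.norm

lemma my_cauchy_schwarz {a b : α → ℝ} (ha : MemLp a 2 μ) (hb : MemLp b 2 μ) :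
    ∫ x, |a x| * |b x| ∂μ ≤ Real.sqrt (∫ x, a x ^ 2 ∂μ) * Real.sqrt (∫ x, b x ^ 2 ∂μ) := by
  have ha' := my_abs_memℒp ha
  have hb' := my_abs_memℒp hb
  have h1 : ∫ x, |a x| * |b x| ∂μ ≤ ‖ha'.toLp _‖ * ‖hb'.toLp _‖ := by
    have := real_inner_le_norm (ha'.toLp _) (hb'.toLp _)
    rw [L2.inner_def] at this
    refine le_trans (le_of_eq ?_) this
    apply MeasureTheory.integral_congr_ae
    filter_upwards [ha'.coeFn_toLp, hb'.coeFn_toLp] with x h1 h2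
    simp [RCLike.inner_apply, h1, h2, mul_comm]
  refine h1.trans (le_of_eq ?_)
  congr 1
  · rw [show ‖ha'.toLp _‖ = Real.sqrt (‖ha'.toLp _‖^2) from (Real.sqrt_sq (norm_nonneg _)).symm,
      norm_toLp_sq]
    congr 1
    exact MeasureTheory.integral_congr_ae (Filter.Eventually.of_forall fun x => by simp [sq_abs])
  · rw [show ‖hb'.toLp _‖ = Real.sqrt (‖hb'.toLp _‖^2) from (Real.sqrt_sq (norm_nonneg _)).symm,
      norm_toLp_sq]
    congr 1
    exact MeasureTheory.integral_congr_ae (Filter.Eventually.of_forall fun x => by simp [sq_abs])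

lemma nonlocal_lip [IsProbabilityMeasure μ]
    (K : α → α → ℝ) (hKmeas : Measurable (Function.uncurry K)) {K₁ : ℝ}
    (hK1 : ∀ᵐ x ∂μ, Integrable (fun y => K x y ^ 2) μ ∧ (∫ y, K x y ^ 2 ∂μ) ≤ K₁)
    (S : ℝ → ℝ → ℝ) {A_S B_S L_S : ℝ} (hAS : 0 ≤ A_S) (hBS : 0 ≤ B_S) (hLS : 0 ≤ L_S)
    (hSbound : ∀ a b, |S a b| ≤ A_S + B_S * (|a| + |b|))
    (hSlip : ∀ a b a' b', |S a b - S a' b'| ≤ L_S * (|a - a'| + |b - b'|))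
    (φ : ℝ → ℝ) {L_f : ℝ} (hLf : 0 ≤ L_f)
    (hφlip : ∀ a b, |φ a - φ b| ≤ L_f * |a - b|)
    (v v' W W' : Lp ℝ 2 μ)
    (hW : ⇑W =ᵐ[μ] fun x => φ (v x) + ∫ y, K x y * S (v x) (v y) ∂μ)
    (hW' : ⇑W' =ᵐ[μ] fun x => φ (v' x) + ∫ y, K x y * S (v' x) (v' y) ∂μ) :
    ‖W - W'‖ ≤ (L_f + 2 * L_S * Real.sqrt K₁) * ‖v - v'‖ := by
  -- continuity of S
  have hScont : Continuous (Function.uncurry S) := by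
    apply LipschitzWith.continuous (K := (2 * L_S).toNNReal)
    apply LipschitzWith.of_dist_le_mul
    intro p q
    rw [Real.coe_toNNReal _ (by linarith), Real.dist_eq, Prod.dist_eq]
    refine (hSlip p.1 p.2 q.1 q.2).trans ?_
    have h1 : |p.1 - q.1| ≤ max (dist p.1 q.1) (dist p.2 q.2) :=
      le_max_of_le_left (le_of_eq (Real.dist_eq _ _).symm)
    have h2 : |p.2 - q.2| ≤ max (dist p.1 q.1) (dist p.2 q.2) :=
      le_max_of_le_right (le_of_eq (Real.dist_eq _ _).symm)
    nlinarith [le_max_iff.1 (le_refl (max (dist p.1 q.1) (dist p.2 q.2)))]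
  have hK₁0 : 0 ≤ K₁ := by
    obtain ⟨x, hx⟩ := hK1.exists
    exact le_trans (integral_nonneg fun y => sq_nonneg _) hx.2
  set sqK := Real.sqrt K₁ with hsqK
  have hsqK0 : 0 ≤ sqK := Real.sqrt_nonneg _
  set R := ‖v - v'‖ with hR
  have hR0 : 0 ≤ R := norm_nonneg _
  set δ : α → ℝ := fun x => v x - v' x with hδ
  have hδm : MemLp δ 2 μ := (Lp.memLp v).sub (Lp.memLp v')
  have hδsq : ∫ x, δ x ^ 2 ∂μ = R ^ 2 := by
    rw [hR, norm_Lp_sq (v - v')]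
    apply MeasureTheory.integral_congr_ae
    filter_upwards [Lp.coeFn_sub v v'] with x hx
    rw [hx]; rfl
  have hδsqrt : Real.sqrt (∫ x, δ x ^ 2 ∂μ) = R := by
    rw [hδsq, Real.sqrt_sq hR0]
  set c₁ := L_f + L_S * sqK with hc₁
  set c₂ := L_S * sqK * R with hc₂
  have hc₁0 : 0 ≤ c₁ := by positivity
  have hc₂0 : 0 ≤ c₂ := by positivity
  -- pointwise a.e. bound
  have hmain : ∀ᵐ x ∂μ, |(W - W' : Lp ℝ 2 μ) x| ≤ c₁ * |δ x| + c₂ := by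
    filter_upwards [hW, hW', hK1, Lp.coeFn_sub W W'] with x h1 h2 hKx hsub
    have hKm : MemLp (fun y => K x y) 2 μ :=
      (memLp_two_iff_integrable_sq
        (hKmeas.of_uncurry_left).aestronglyMeasurable).2 hKx.1
    have hKsq : Real.sqrt (∫ y, K x y ^ 2 ∂μ) ≤ sqK := Real.sqrt_le_sqrt hKx.2
    -- MemLp of the S-compositions
    have hSmem : ∀ u : Lp ℝ 2 μ, MemLp (fun y => S (u x) (u y)) 2 μ := by
      intro u
      have hmeas : AEStronglyMeasurable (fun y => S (u x) (u y)) μ := by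
        have hc : Continuous fun r : ℝ => S (u x) r := hScont.comp (Continuous.prodMk_right (u x))
        exact hc.comp_aestronglyMeasurable (Lp.aestronglyMeasurable u)
      refine MemLp.of_le (g := fun y => (A_S + B_S * |u x|) + B_S * |u y|)
        ((memLp_const (μ := μ) (p := 2) (A_S + B_S * |u x|)).add ((my_abs_memℒp (Lp.memLp u)).const_mul B_S)) hmeas ?_
      filter_upwards with y
      rw [Real.norm_eq_abs, Real.norm_eq_abs]
      refine (hSbound (u x) (u y)).trans ?_
      exact le_trans (le_of_eq (by ring)) (le_abs_self _)
    have hint1 : Integrable (fun y => K x y * S (v x) (v y)) μ :=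
      my_integrable_mul hKm (hSmem v)
    have hint2 : Integrable (fun y => K x y * S (v' x) (v' y)) μ :=
      my_integrable_mul hKm (hSmem v')
    have hintK : Integrable (fun y => |K x y|) μ :=
      (my_abs_memℒp hKm).integrable one_le_two
    have hintKd : Integrable (fun y => |K x y| * |δ y|) μ :=
      my_integrable_mul (my_abs_memℒp hKm) (my_abs_memℒp hδm)
    have hK_L1 : ∫ y, |K x y| ∂μ ≤ sqK := by
      have h := my_cauchy_schwarz hKm (memLp_const (1:ℝ))
      simp only [abs_one, mul_one, one_pow, MeasureTheory.integral_const, measure_univ, probReal_univ, ENNReal.toReal_one,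
        smul_eq_mul, Real.sqrt_one] at h
      exact h.trans hKsq
    have hKd : ∫ y, |K x y| * |δ y| ∂μ ≤ sqK * R := by
      have h := my_cauchy_schwarz hKm hδm
      rw [hδsqrt] at h
      exact h.trans (mul_le_mul_of_nonneg_right hKsq hR0)
    have hdiff : (∫ y, K x y * S (v x) (v y) ∂μ) - ∫ y, K x y * S (v' x) (v' y) ∂μ
        = ∫ y, (K x y * S (v x) (v y) - K x y * S (v' x) (v' y)) ∂μ :=
      (integral_sub hint1 hint2).symm
    have hptw : ∀ y, |K x y * S (v x) (v y) - K x y * S (v' x) (v' y)|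
        ≤ (L_S * |δ x|) * |K x y| + L_S * (|K x y| * |δ y|) := by
      intro y
      rw [← mul_sub, abs_mul]
      have h3 : |S (v x) (v y) - S (v' x) (v' y)| ≤ L_S * (|δ x| + |δ y|) :=
        hSlip (v x) (v y) (v' x) (v' y)
      calc |K x y| * |S (v x) (v y) - S (v' x) (v' y)|
          ≤ |K x y| * (L_S * (|δ x| + |δ y|)) :=
            mul_le_mul_of_nonneg_left h3 (abs_nonneg _)
        _ = (L_S * |δ x|) * |K x y| + L_S * (|K x y| * |δ y|) := by ring
    have habs : |∫ y, (K x y * S (v x) (v y) - K x y * S (v' x) (v' y)) ∂μ|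
        ≤ L_S * sqK * |δ x| + L_S * (sqK * R) := by
      have h1 : |∫ y, (K x y * S (v x) (v y) - K x y * S (v' x) (v' y)) ∂μ|
          ≤ ∫ y, |K x y * S (v x) (v y) - K x y * S (v' x) (v' y)| ∂μ := by
        simpa [Real.norm_eq_abs] using norm_integral_le_integral_norm
          (μ := μ) (fun y => K x y * S (v x) (v y) - K x y * S (v' x) (v' y))
      refine h1.trans ?_
      have hga : Integrable (fun y : α => (L_S * |δ x|) * |K x y|) μ := by
        exact hintK.const_mul _
      have hgb : Integrable (fun y : α => L_S * (|K x y| * |δ y|)) μ := by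
        exact hintKd.const_mul _
      have hgab : Integrable
          (fun y : α => (L_S * |δ x|) * |K x y| + L_S * (|K x y| * |δ y|)) μ := by
        exact hga.add hgb
      have h2 : ∫ y, |K x y * S (v x) (v y) - K x y * S (v' x) (v' y)| ∂μ
          ≤ ∫ y, ((L_S * |δ x|) * |K x y| + L_S * (|K x y| * |δ y|)) ∂μ := by
        apply integral_mono (hint1.sub hint2).abs hgab hptw
      refine h2.trans ?_
      rw [integral_add hga hgb, MeasureTheory.integral_const_mul, MeasureTheory.integral_const_mul]
      have e1 : (L_S * |δ x|) * ∫ y, |K x y| ∂μ ≤ (L_S * |δ x|) * sqK :=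
        mul_le_mul_of_nonneg_left hK_L1 (by positivity)
      have e2 : L_S * ∫ y, |K x y| * |δ y| ∂μ ≤ L_S * (sqK * R) :=
        mul_le_mul_of_nonneg_left hKd hLS
      calc (L_S * |δ x|) * (∫ y, |K x y| ∂μ) + L_S * ∫ y, |K x y| * |δ y| ∂μ
          ≤ (L_S * |δ x|) * sqK + L_S * (sqK * R) := add_le_add e1 e2
        _ = L_S * sqK * |δ x| + L_S * (sqK * R) := by ring
    -- put the pieces together
    have e1 : (W - W' : Lp ℝ 2 μ) x = (φ (v x) - φ (v' x))
        + ((∫ y, K x y * S (v x) (v y) ∂μ) - ∫ y, K x y * S (v' x) (v' y) ∂μ) := by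
      rw [hsub, Pi.sub_apply, h1, h2]; ring
    have e3 : |v x - v' x| = |δ x| := rfl
    have e4 : |φ (v x) - φ (v' x)| ≤ L_f * |δ x| := e3 ▸ hφlip (v x) (v' x)
    rw [e1]
    refine (abs_add_le _ _).trans ?_
    rw [hdiff]
    calc |φ (v x) - φ (v' x)|
          + |∫ y, (K x y * S (v x) (v y) - K x y * S (v' x) (v' y)) ∂μ|
        ≤ L_f * |δ x| + (L_S * sqK * |δ x| + L_S * (sqK * R)) := add_le_add e4 habs
      _ = c₁ * |δ x| + c₂ := by rw [hc₁, hc₂]; ring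
  -- from the pointwise bound to the norm bound
  have hIabs : Integrable (fun x => |δ x|) μ := (my_abs_memℒp hδm).integrable one_le_two
  have hId2 : Integrable (fun x => δ x ^ 2) μ := hδm.integrable_sq
  have hbm : MemLp (fun x => c₁ * |δ x| + c₂) 2 μ :=
    ((my_abs_memℒp hδm).const_mul c₁).add (memLp_const c₂)
  have hsq : ‖W - W'‖ ^ 2 ≤ (c₁ * R + c₂) ^ 2 := by
    rw [norm_Lp_sq]
    have h1 : ∫ x, ((W - W' : Lp ℝ 2 μ) x) ^ 2 ∂μ ≤ ∫ x, (c₁ * |δ x| + c₂) ^ 2 ∂μ := by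
      apply integral_mono_ae (Lp.memLp (W - W')).integrable_sq hbm.integrable_sq
      filter_upwards [hmain] with x hx
      calc ((W - W' : Lp ℝ 2 μ) x) ^ 2 = |(W - W' : Lp ℝ 2 μ) x| ^ 2 := (sq_abs _).symm
        _ ≤ (c₁ * |δ x| + c₂) ^ 2 := by
            apply pow_le_pow_left₀ (abs_nonneg _) hx
    refine h1.trans ?_
    have hsplit : ∫ x, (c₁ * |δ x| + c₂) ^ 2 ∂μ
        = c₁ ^ 2 * (∫ x, δ x ^ 2 ∂μ) + 2 * c₁ * c₂ * (∫ x, |δ x| ∂μ) + c₂ ^ 2 := by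
      have hfe : (fun x => (c₁ * |δ x| + c₂) ^ 2)
          = fun x => c₁ ^ 2 * δ x ^ 2 + (2 * c₁ * c₂ * |δ x| + c₂ ^ 2) := by
        funext x
        linear_combination (c₁ ^ 2 : ℝ) * sq_abs (δ x)
      have hg1 : Integrable (fun x : α => 2 * c₁ * c₂ * |δ x| + c₂ ^ 2) μ := by
        exact (hIabs.const_mul _).add (integrable_const _)
      have hg2 : Integrable (fun x : α => 2 * c₁ * c₂ * |δ x|) μ := by
        exact hIabs.const_mul _
      have hg3 : Integrable (fun x : α => c₁ ^ 2 * δ x ^ 2) μ := by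
        exact hId2.const_mul _
      rw [hfe, integral_add hg3 hg1, integral_add hg2 (integrable_const _),
        MeasureTheory.integral_const_mul, MeasureTheory.integral_const_mul, MeasureTheory.integral_const]
      simp only [measure_univ, probReal_univ, ENNReal.toReal_one, smul_eq_mul, one_mul]
      ring
    have hd1 : ∫ x, |δ x| ∂μ ≤ R := by
      have h := my_cauchy_schwarz hδm (memLp_const (1:ℝ))
      simp only [abs_one, mul_one, one_pow, MeasureTheory.integral_const, measure_univ, probReal_univ, ENNReal.toReal_one,
        smul_eq_mul, Real.sqrt_one] at h
      rw [hδsqrt] at h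
      simpa using h
    rw [hsplit, hδsq]
    nlinarith [mul_le_mul_of_nonneg_left hd1 (show (0:ℝ) ≤ 2 * c₁ * c₂ by positivity)]
  have hfin : ‖W - W'‖ ≤ c₁ * R + c₂ := by
    have h0 : (0:ℝ) ≤ c₁ * R + c₂ := by positivity
    nlinarith [norm_nonneg (W - W'), hsq]
  calc ‖W - W'‖ ≤ c₁ * R + c₂ := hfin
    _ = (L_f + 2 * L_S * sqK) * R := by rw [hc₁, hc₂]; ring

section picard
open Function

theorem abstract_picard {E : Type*} [NormedAddCommGroup E] [NormedSpace ℝ E] [CompleteSpace E]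
    (T : ℝ) (hT : 0 < T) (N : ℝ → E → E) (C : ℝ) (hC : 0 ≤ C)
    (hLip : ∀ s ∈ Icc (0:ℝ) T, ∀ v v' : E, ‖N s v - N s v'‖ ≤ C * ‖v - v'‖)
    (hCont : ∀ v : E, ContinuousOn (fun s => N s v) (Icc 0 T))
    (g : E) (w : ℝ → E) (hw : Continuous w) :
    ∃ u : ℝ → E,
      (ContinuousOn u (Icc 0 T) ∧
        ∀ t ∈ Icc (0:ℝ) T, u t = g + (∫ s in (0:ℝ)..t, N s (u s)) + w t) ∧
      ∀ v : ℝ → E, ContinuousOn v (Icc 0 T) →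
        (∀ t ∈ Icc (0:ℝ) T, v t = g + (∫ s in (0:ℝ)..t, N s (v s)) + w t) →
        EqOn v u (Icc 0 T) := by
  haveI : Nonempty (Icc (0:ℝ) T) := ⟨⟨0, le_refl 0, hT.le⟩⟩
  -- joint continuity of N on univ ×ˢ Icc 0 T (as a map from E × ℝ)
  have hJoint : ContinuousOn (fun p : E × ℝ => N p.2 p.1) (univ ×ˢ Icc 0 T) := by
    apply continuousOn_prod_of_continuousOn_lipschitzOnWith _ C.toNNReal
    · intro v _; exact hCont v
    · intro s hs
      apply LipschitzOnWith.of_dist_le_mul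
      intro v _ v' _
      rw [dist_eq_norm, dist_eq_norm, Real.coe_toNNReal _ hC]
      exact hLip s hs v v'
  set X := C(Icc (0:ℝ) T, E) with hX
  -- extension operator
  set e : X → ℝ → E := fun u t => u (projIcc 0 T hT.le t) with he
  have he_cont : ∀ u : X, Continuous (e u) := fun u => u.continuous.comp continuous_projIcc
  have he_eq : ∀ (u : X) (t : ℝ) (ht : t ∈ Icc (0:ℝ) T), e u t = u ⟨t, ht⟩ := by
    intro u t ht
    exact congrArg u (projIcc_of_mem hT.le ht)
  -- the integrand
  set F : X → ℝ → E := fun u s => N s (e u s) with hF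
  have hFcont : ∀ u : X, ContinuousOn (F u) (Icc 0 T) := by
    intro u
    have : ContinuousOn (fun s : ℝ => (e u s, s)) (Icc 0 T) :=
      ((he_cont u).continuousOn).prodMk continuousOn_id
    refine hJoint.comp this ?_
    intro s hs
    exact ⟨trivial, hs⟩
  have hFii : ∀ (u : X) (t : ℝ), t ∈ Icc (0:ℝ) T → IntervalIntegrable (F u) volume 0 t := by
    intro u t ht
    apply ContinuousOn.intervalIntegrable
    rw [uIcc_of_le ht.1]
    exact (hFcont u).mono (Icc_subset_Icc le_rfl ht.2)
  -- the Picard map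
  have hΦdef : ∀ u : X, Continuous fun t : Icc (0:ℝ) T => g + (∫ s in (0:ℝ)..(t:ℝ), F u s) + w t := by
    intro u
    have hint : IntegrableOn (F u) (uIcc (0:ℝ) T) volume := by
      rw [uIcc_of_le hT.le]
      exact (hFcont u).integrableOn_compact isCompact_Icc
    have h1 : ContinuousOn (fun t : ℝ => ∫ s in (0:ℝ)..t, F u s) (Icc 0 T) := by
      have := intervalIntegral.continuousOn_primitive_interval (a := (0:ℝ)) (b := T) hint
      rwa [uIcc_of_le hT.le] at this
    have h2 : Continuous fun t : Icc (0:ℝ) T => ∫ s in (0:ℝ)..(t:ℝ), F u s :=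
      h1.comp_continuous continuous_subtype_val fun t => t.2
    exact (continuous_const.add h2).add (hw.comp continuous_subtype_val)
  set Φ : X → X := fun u => ⟨_, hΦdef u⟩ with hΦ
  have hΦapp : ∀ (u : X) (t : Icc (0:ℝ) T),
      Φ u t = g + (∫ s in (0:ℝ)..(t:ℝ), F u s) + w t := fun u t => rfl
  -- pointwise iterate estimate
  have hkey : ∀ (n : ℕ) (u v : X) (t : Icc (0:ℝ) T),
      ‖(Φ^[n] u) t - (Φ^[n] v) t‖ ≤ C ^ n * (t:ℝ) ^ n / n.factorial * dist u v := by
    intro n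
    induction n with
    | zero =>
      intro u v t
      simp only [Function.iterate_zero, id_eq, pow_zero, Nat.factorial_zero, Nat.cast_one,
        one_mul, div_one]
      rw [← dist_eq_norm]
      exact ContinuousMap.dist_apply_le_dist t
    | succ n ih =>
      intro u v t
      rw [Function.iterate_succ_apply', Function.iterate_succ_apply']
      set u' := Φ^[n] u
      set v' := Φ^[n] v
      have hsub : Φ u' t - Φ v' t = ∫ s in (0:ℝ)..(t:ℝ), (F u' s - F v' s) := by
        rw [hΦapp, hΦapp, intervalIntegral.integral_sub (hFii u' t t.2) (hFii v' t t.2)]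
        abel
      rw [hsub]
      have hb : ∀ s ∈ Set.uIoc (0:ℝ) (t:ℝ), ‖F u' s - F v' s‖ ≤
          C ^ (n+1) * s ^ n / n.factorial * dist u v := by
        intro s hs
        rw [uIoc_of_le t.2.1] at hs
        have hs' : s ∈ Icc (0:ℝ) T := ⟨hs.1.le, hs.2.trans t.2.2⟩
        have h1 : ‖N s (e u' s) - N s (e v' s)‖ ≤ C * ‖e u' s - e v' s‖ := hLip s hs' _ _
        have h2 : ‖e u' s - e v' s‖ ≤ C ^ n * s ^ n / n.factorial * dist u v := by
          rw [he_eq u' s hs', he_eq v' s hs']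
          exact ih u v ⟨s, hs'⟩
        calc ‖F u' s - F v' s‖ ≤ C * ‖e u' s - e v' s‖ := h1
          _ ≤ C * (C ^ n * s ^ n / n.factorial * dist u v) := by
              exact mul_le_mul_of_nonneg_left h2 hC
          _ = C ^ (n+1) * s ^ n / n.factorial * dist u v := by ring
      have hgint : IntervalIntegrable
          (fun s => C ^ (n+1) * s ^ n / n.factorial * dist u v) volume 0 (t:ℝ) := by
        exact (((continuous_const.mul (continuous_pow n)).div_const _).mul
          continuous_const).intervalIntegrable _ _
      have := intervalIntegral.norm_integral_le_of_norm_le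
        (f := fun s => F u' s - F v' s)
        (g := fun s => C ^ (n+1) * s ^ n / n.factorial * dist u v)
        t.2.1 (Filter.Eventually.of_forall fun s hs => hb s (by rw [uIoc_of_le t.2.1]; exact hs)) hgint
      refine this.trans ?_
      have hval : (∫ s in (0:ℝ)..(t:ℝ), C ^ (n+1) * s ^ n / n.factorial * dist u v)
          = C ^ (n+1) * (t:ℝ) ^ (n+1) / (n+1).factorial * dist u v := by
        have : (fun s : ℝ => C ^ (n+1) * s ^ n / n.factorial * dist u v)
            = fun s : ℝ => (C ^ (n+1) / n.factorial * dist u v) * s ^ n := by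
          funext s; ring
        rw [this, intervalIntegral.integral_const_mul, integral_pow]
        rw [Nat.factorial_succ]
        push_cast
        field_simp
        ring
      have ht0 : (0:ℝ) ≤ (t:ℝ) := t.2.1
      rw [hval]
  -- choose an iterate which is a contraction
  obtain ⟨n, hn⟩ : ∃ n : ℕ, (C * T) ^ n / n.factorial < 1 :=
    ((FloorSemiring.tendsto_pow_div_factorial_atTop (C * T)).eventually
      (gt_mem_nhds one_pos)).exists
  have hq0 : (0:ℝ) ≤ (C * T) ^ n / n.factorial := by positivity
  set q : NNReal := ((C * T) ^ n / n.factorial).toNNReal with hq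
  have hqc : (q : ℝ) = (C * T) ^ n / n.factorial := Real.coe_toNNReal _ hq0
  have hq1 : q < 1 := by
    rw [← NNReal.coe_lt_coe, hqc, NNReal.coe_one]
    exact hn
  have hcontr : ContractingWith q (Φ^[n]) := by
    refine ⟨hq1, LipschitzWith.of_dist_le_mul fun u v => ?_⟩
    rw [hqc]
    rw [ContinuousMap.dist_le (by positivity)]
    intro t
    have ht0 : (0:ℝ) ≤ (t:ℝ) := t.2.1
    have h1 : dist (Φ^[n] u t) (Φ^[n] v t) ≤ C ^ n * (t:ℝ) ^ n / n.factorial * dist u v := by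
      rw [dist_eq_norm]; exact hkey n u v t
    refine h1.trans ?_
    have h2 : C ^ n * (t:ℝ) ^ n ≤ (C * T) ^ n := by
      rw [mul_pow]
      exact mul_le_mul_of_nonneg_left (pow_le_pow_left₀ ht0 t.2.2 n) (by positivity)
    have h3 : C ^ n * (t:ℝ) ^ n / n.factorial ≤ (C * T) ^ n / n.factorial := by
      apply div_le_div_of_nonneg_right h2 ?_ |>.trans_eq rfl
      · positivity
    exact mul_le_mul_of_nonneg_right h3 dist_nonneg
  set x : X := ContractingWith.fixedPoint (Φ^[n]) hcontr with hx
  have hxiter : Function.IsFixedPt (Φ^[n]) x := hcontr.fixedPoint_isFixedPt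
  have hxfix : Function.IsFixedPt Φ x := hcontr.isFixedPt_fixedPoint_iterate
  refine ⟨e x, ⟨(he_cont x).continuousOn, ?_⟩, ?_⟩
  · intro t ht
    calc e x t = x ⟨t, ht⟩ := he_eq x t ht
      _ = Φ x ⟨t, ht⟩ := by rw [hxfix.eq]
      _ = g + (∫ s in (0:ℝ)..t, N s (e x s)) + w t := by
          rw [hΦapp x ⟨t, ht⟩]
  · intro v hvcont hveq t ht
    set vr : X := ⟨(Icc (0:ℝ) T).restrict v, hvcont.restrict⟩ with hvr
    have hvfix : Function.IsFixedPt Φ vr := by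
      apply ContinuousMap.ext
      intro τ
      have hτ : (τ:ℝ) ∈ Icc (0:ℝ) T := τ.2
      have heqon : EqOn (F vr) (fun s => N s (v s)) (uIcc 0 (τ:ℝ)) := by
        intro s hs
        rw [uIcc_of_le hτ.1] at hs
        have hs' : s ∈ Icc (0:ℝ) T := ⟨hs.1, hs.2.trans hτ.2⟩
        show N s (e vr s) = N s (v s)
        rw [he_eq vr s hs']
        rfl
      have : Φ vr τ = g + (∫ s in (0:ℝ)..(τ:ℝ), N s (v s)) + w τ := by
        rw [hΦapp vr τ, intervalIntegral.integral_congr heqon]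
      rw [this, ← hveq τ hτ]
      rfl
    have hveqx : vr = x := hcontr.fixedPoint_unique' (hvfix.iterate n) hxiter
    calc v t = vr ⟨t, ht⟩ := rfl
      _ = x ⟨t, ht⟩ := by rw [hveqx]
      _ = e x t := (he_eq x t ht).symm

end picard

end helpers

/-- pathwise well-posedness of the nonlocal evolution equation
`u(t) = g + ∫₀ᵗ [f(s,u(s)) + 𝐊[u(s)]] ds + w(t)` in `L²(I^d)`.  The Nemytskii-type drift
`N : [0,T] × L² → L²`, `N(s,v) = f(s,v(·)) + ∫ K(·,y) S(v(·),v(y)) dy`, is given through its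
almost-everywhere characterization `hN`. -/
theorem nonlocal_equation_wellposed
    (d : ℕ) (hd : 1 ≤ d) (T : ℝ) (hT : 0 < T)
    (K : (Fin d → ℝ) → (Fin d → ℝ) → ℝ) (hKmeas : Measurable (Function.uncurry K))
    (K₁ K₂ : ℝ)
    (hK1 : ∀ᵐ x ∂cubeMeasure d,
      Integrable (fun y => (K x y) ^ 2) (cubeMeasure d) ∧
        (∫ y, (K x y) ^ 2 ∂cubeMeasure d) ≤ K₁)
    (hK2 : ∀ᵐ y ∂cubeMeasure d,
      Integrable (fun x => (K x y) ^ 2) (cubeMeasure d) ∧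
        (∫ x, (K x y) ^ 2 ∂cubeMeasure d) ≤ K₂)
    (S : ℝ → ℝ → ℝ)
    (A_S B_S L_S : ℝ) (hAS : 0 ≤ A_S) (hBS : 0 ≤ B_S) (hLS : 0 ≤ L_S)
    (hSbound : ∀ a b : ℝ, |S a b| ≤ A_S + B_S * (|a| + |b|))
    (hSlip : ∀ a b a' b' : ℝ, |S a b - S a' b'| ≤ L_S * (|a - a'| + |b - b'|))
    (f : ℝ → ℝ → ℝ) (hfcont : Continuous (Function.uncurry f))
    (A_f B_f L_f : ℝ) (hAf : 0 ≤ A_f) (hBf : 0 ≤ B_f) (hLf : 0 ≤ L_f)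
    (hfbound : ∀ t ∈ Set.Icc (0:ℝ) T, ∀ v : ℝ, |f t v| ≤ A_f + B_f * |v|)
    (hflip : ∀ t ∈ Set.Icc (0:ℝ) T, ∀ v v' : ℝ, |f t v - f t v'| ≤ L_f * |v - v'|)
    (g : Lp ℝ 2 (cubeMeasure d)) (w : ℝ → Lp ℝ 2 (cubeMeasure d)) (hw : Continuous w)
    (N : ℝ → Lp ℝ 2 (cubeMeasure d) → Lp ℝ 2 (cubeMeasure d))
    (hN : ∀ s ∈ Set.Icc (0:ℝ) T, ∀ v : Lp ℝ 2 (cubeMeasure d),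
      (N s v : (Fin d → ℝ) → ℝ) =ᵐ[cubeMeasure d]
        fun x => f s (v x) + ∫ y, K x y * S (v x) (v y) ∂cubeMeasure d) :
    ∃ u : ℝ → Lp ℝ 2 (cubeMeasure d),
      (ContinuousOn u (Set.Icc 0 T) ∧
        ∀ t ∈ Set.Icc (0:ℝ) T, u t = g + (∫ s in (0:ℝ)..t, N s (u s)) + w t) ∧
      ∀ v : ℝ → Lp ℝ 2 (cubeMeasure d), ContinuousOn v (Set.Icc 0 T) →
        (∀ t ∈ Set.Icc (0:ℝ) T, v t = g + (∫ s in (0:ℝ)..t, N s (v s)) + w t) →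
        Set.EqOn v u (Set.Icc 0 T) := by
  have hC : (0:ℝ) ≤ L_f + 2 * L_S * Real.sqrt K₁ := by positivity
  have hLip : ∀ s ∈ Icc (0:ℝ) T, ∀ v v' : Lp ℝ 2 (cubeMeasure d),
      ‖N s v - N s v'‖ ≤ (L_f + 2 * L_S * Real.sqrt K₁) * ‖v - v'‖ := by
    intro s hs v v'
    exact nonlocal_lip K hKmeas hK1 S hAS hBS hLS hSbound hSlip (f s) hLf
      (fun a b => hflip s hs a b) v v' (N s v) (N s v') (hN s hs v) (hN s hs v')
  have hCont : ∀ v : Lp ℝ 2 (cubeMeasure d), ContinuousOn (fun s => N s v) (Icc 0 T) := by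
    intro v s₀ hs₀
    have hvm := Lp.aestronglyMeasurable v
    set G : ℝ → (Fin d → ℝ) → ℝ := fun s x => (f s (v x) - f s₀ (v x)) ^ 2 with hG
    have hGm : ∀ s : ℝ, AEStronglyMeasurable (G s) (cubeMeasure d) := by
      intro s
      have h1 : Continuous fun r : ℝ => f s r := hfcont.comp (Continuous.prodMk_right s)
      have h2 : Continuous fun r : ℝ => f s₀ r := hfcont.comp (Continuous.prodMk_right s₀)
      have h3 : Continuous fun r : ℝ => (f s r - f s₀ r) ^ 2 := (h1.sub h2).pow 2
      exact h3.comp_aestronglyMeasurable hvm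
    have hbound_mem : MemLp (fun x => 2 * (A_f + B_f * |v x|)) 2 (cubeMeasure d) := by
      exact ((memLp_const A_f).add
        ((my_abs_memℒp (Lp.memLp v)).const_mul B_f)).const_mul 2
    have hbound_int : Integrable (fun x => (2 * (A_f + B_f * |v x|)) ^ 2) (cubeMeasure d) :=
      hbound_mem.integrable_sq
    have hphi : ContinuousWithinAt (fun s => ∫ x, G s x ∂cubeMeasure d) (Icc 0 T) s₀ := by
      apply continuousWithinAt_of_dominated
        (bound := fun x => (2 * (A_f + B_f * |v x|)) ^ 2)
      · exact Filter.Eventually.of_forall fun s => hGm s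
      · filter_upwards [self_mem_nhdsWithin] with s hs
        filter_upwards with x
        have e1 := hfbound s hs (v x)
        have e2 := hfbound s₀ hs₀ (v x)
        have e3 : |f s (v x) - f s₀ (v x)| ≤ 2 * (A_f + B_f * |v x|) := by
          calc |f s (v x) - f s₀ (v x)| ≤ |f s (v x)| + |f s₀ (v x)| := abs_sub _ _
            _ ≤ 2 * (A_f + B_f * |v x|) := by linarith
        simp only [hG, Real.norm_eq_abs]
        rw [abs_of_nonneg (sq_nonneg _)]
        calc (f s (v x) - f s₀ (v x)) ^ 2 = |f s (v x) - f s₀ (v x)| ^ 2 := (sq_abs _).symm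
          _ ≤ (2 * (A_f + B_f * |v x|)) ^ 2 := by
              apply pow_le_pow_left₀ (abs_nonneg _) e3
      · exact hbound_int
      · filter_upwards with x
        have h1 : Continuous fun s : ℝ => f s (v x) :=
          hfcont.comp (continuous_id.prodMk continuous_const)
        exact ((h1.sub continuous_const).pow 2).continuousWithinAt
    have hzero : ∫ x, G s₀ x ∂cubeMeasure d = 0 := by simp [hG]
    have hnorm : ∀ s ∈ Icc (0:ℝ) T, ‖N s v - N s₀ v‖ ^ 2 = ∫ x, G s x ∂cubeMeasure d := by
      intro s hs
      rw [norm_Lp_sq]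
      apply MeasureTheory.integral_congr_ae
      filter_upwards [hN s hs v, hN s₀ hs₀ v, Lp.coeFn_sub (N s v) (N s₀ v)]
        with x h1 h2 h3
      rw [h3, Pi.sub_apply, h1, h2, hG]
      ring
    rw [ContinuousWithinAt, tendsto_iff_dist_tendsto_zero]
    have h4 : Filter.Tendsto (fun s => ∫ x, G s x ∂cubeMeasure d)
        (nhdsWithin s₀ (Icc 0 T)) (nhds 0) := by
      have := hphi
      rwa [ContinuousWithinAt, hzero] at this
    have h5 := (Real.continuous_sqrt.tendsto 0).comp h4
    rw [Real.sqrt_zero] at h5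
    apply h5.congr'
    filter_upwards [self_mem_nhdsWithin] with s hs
    rw [Function.comp_apply, dist_eq_norm, ← hnorm s hs, Real.sqrt_sq (norm_nonneg _)]
  exact abstract_picard T hT N (L_f + 2 * L_S * Real.sqrt K₁) hC hLip hCont g w hw
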